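/- arXiv:2507.17017 — 4 statements merged into one kernel-verified Lean document; each statement's English description precedes it below -/
import Mathlib

section
/- Geometric decomposition: let ε > 0 and r be a positive integer. If X ~ Geo(e^{-rε}) on ℕ (P(X = k) = (1 - e^{-rε})·e^{-rεk}) and Y is the truncated geometric on {0, ..., r-1} with P(Y = t) = (1 - e^{-ε})/(1 - e^{-εr}) · e^{-εt}, with X and Y independent, then r·X + Y is distributed as Geo(e^{-ε}) on ℕ. -/
/-- Geometric decomposition: if `X ~ Geo(e^{-rε})` on `ℕ` and `Y` is the truncated
geometric on `{0,…,r-1}` with `P(Y = t) = (1-e^{-ε})/(1-e^{-εr}) · e^{-εt}`,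
independent, then `r·X + Y ~ Geo(e^{-ε})`: its mass at every `k ∈ ℕ`
equals `(1-e^{-ε}) · e^{-εk}`. -/
theorem geometric_decomposition (ε : ℝ) (hε : 0 < ε) (r : ℕ) (hr : 0 < r) (k : ℕ) :
    (∑' w : ℕ × ℕ,
      (if w.2 < r ∧ r * w.1 + w.2 = k
        then ((1 - Real.exp (-(r * ε))) * Real.exp (-(r * ε) * w.1))
             * ((1 - Real.exp (-ε)) / (1 - Real.exp (-(ε * r))) * Real.exp (-ε * w.2))
        else 0))
    = (1 - Real.exp (-ε)) * Real.exp (-ε * k) := by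
  rw [tsum_eq_single (k / r, k % r)]
  · have hcond : k % r < r ∧ r * (k / r) + k % r = k :=
      ⟨Nat.mod_lt _ hr, Nat.div_add_mod k r⟩
    rw [if_pos hcond]
    have hne : (1 : ℝ) - Real.exp (-(ε * r)) ≠ 0 := by
      have hpos : (0:ℝ) < ε * r := by positivity
      have : Real.exp (-(ε * r)) < 1 := by
        rw [Real.exp_lt_one_iff]; linarith
      linarith
    have h1 : -(↑r * ε) = -(ε * ↑r) := by ring
    rw [h1]
    field_simp
    have hcast : (r : ℝ) * (↑(k / r)) + (↑(k % r)) = (k : ℝ) := by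
      have := hcond.2
      exact_mod_cast congrArg (Nat.cast : ℕ → ℝ) this
    have hk : (ε * ↑r * ↑(k / r)) + ε * ↑(k % r) = ε * ↑k := by
      linear_combination ε * hcast
    have hE : Real.exp (-(ε * ↑r * ↑(k / r))) * Real.exp (-(ε * ↑(k % r)))
        = Real.exp (-(ε * ↑k)) := by
      rw [← Real.exp_add]; congr 1; linarith
    linear_combination (1 - Real.exp (-ε)) * hE
  · rintro ⟨a, b⟩ hne
    rw [if_neg]
    rintro ⟨hb, hab⟩
    apply hne
    have ha : a = k / r := by
      rw [← hab, Nat.mul_add_div hr, Nat.div_eq_of_lt hb, add_zero]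
    have hb2 : b = k % r := by
      rw [← hab, Nat.mul_add_mod, Nat.mod_eq_of_lt hb]
    simp [ha, hb2]
end

section
/- Purification preserves privacy: let M' : Y → Z with Z finite, and suppose there exists an ε-differentially private M : Y → Z such that the total variation distance between M(y) and M'(y) is at most δ for all y, where δ ≤ (e^ε - 1)/(e^ε + 1) · γ/(1 - γ) · 1/|Z| for some γ ∈ (0,1). Then the algorithm that outputs M'(y) with probability 1 - γ and a uniform element of Z with probability γ is ε-differentially private. -/
/-!
Moving `M` to `M'` costs at most `δ` on every event, so on each event `M'` is `ε`-DP up to an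
additive `(e^ε + 1) δ`. After mixing with the uniform distribution, every nonempty event carries
probability at least `γ / |Z|` under both inputs; the bound on `δ` is exactly what lets the
multiplicative slack `(e^ε - 1) · γ / |Z|` of that uniform mass absorb the additive error.
-/

open Finset

theorem sum_sub_le_half_sum_abs_sub {Z : Type*} [Fintype Z] {f g : Z → ℝ}
    (hfg : ∑ z, f z = ∑ z, g z) (E : Finset Z) :
    ∑ z ∈ E, (f z - g z) ≤ 1 / 2 * ∑ z, |f z - g z| := by
  have hpos : ∀ z, 0 ≤ (|f z - g z| + (f z - g z)) / 2 := fun z => by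
    linarith [neg_abs_le (f z - g z)]
  calc ∑ z ∈ E, (f z - g z)
      ≤ ∑ z ∈ E, (|f z - g z| + (f z - g z)) / 2 :=
        sum_le_sum fun z _ => by linarith [le_abs_self (f z - g z)]
    _ ≤ ∑ z, (|f z - g z| + (f z - g z)) / 2 :=
        sum_le_sum_of_subset_of_nonneg (subset_univ E) fun z _ _ => hpos z
    _ = 1 / 2 * ∑ z, |f z - g z| + 1 / 2 * (∑ z, f z - ∑ z, g z) := by
        rw [← sum_sub_distrib, mul_sum, mul_sum, ← sum_add_distrib]
        exact sum_congr rfl fun z _ => by ring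
    _ = 1 / 2 * ∑ z, |f z - g z| := by rw [hfg, sub_self, mul_zero, add_zero]

theorem sum_le_sum_add_of_half_sum_abs_sub_le {Z : Type*} [Fintype Z] {f g : Z → ℝ} {δ : ℝ}
    (hfg : ∑ z, f z = ∑ z, g z) (hδ : 1 / 2 * ∑ z, |f z - g z| ≤ δ) (E : Finset Z) :
    ∑ z ∈ E, f z ≤ ∑ z ∈ E, g z + δ := by
  have := sum_sub_le_half_sum_abs_sub hfg E
  rw [sum_sub_distrib] at this
  linarith

theorem sum_le_mul_sum_add_of_tv_le {Z : Type*} [Fintype Z] {p p' q q' : Z → ℝ} {c δ : ℝ}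
    (hc : 0 ≤ c) (hp : ∑ z, p z = ∑ z, p' z) (hq : ∑ z, q z = ∑ z, q' z)
    (hp_tv : 1 / 2 * ∑ z, |p z - p' z| ≤ δ) (hq_tv : 1 / 2 * ∑ z, |q z - q' z| ≤ δ)
    (E : Finset Z) (hpq : ∑ z ∈ E, p z ≤ c * ∑ z ∈ E, q z) :
    ∑ z ∈ E, p' z ≤ c * ∑ z ∈ E, q' z + (c + 1) * δ := by
  have hp' : 1 / 2 * ∑ z, |p' z - p z| ≤ δ := by simpa only [abs_sub_comm] using hp_tv
  have hp'E := sum_le_sum_add_of_half_sum_abs_sub_le hp.symm hp' E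
  have hqE := sum_le_sum_add_of_half_sum_abs_sub_le hq hq_tv E
  nlinarith

theorem mul_add_one_mul_le_of_le_div {c δ γ n : ℝ} (hc : 0 < c + 1) (hγ : γ < 1)
    (hδ : δ ≤ (c - 1) / (c + 1) * (γ / (1 - γ)) * (1 / n)) :
    (1 - γ) * ((c + 1) * δ) ≤ (c - 1) * (γ / n) := by
  have h1γ : 0 < 1 - γ := sub_pos.mpr hγ
  calc (1 - γ) * ((c + 1) * δ)
      ≤ (1 - γ) * ((c + 1) * ((c - 1) / (c + 1) * (γ / (1 - γ)) * (1 / n))) := by gcongr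
    _ = (c - 1) * (γ / n) := by field_simp

theorem purification_preserves_privacy_general {Y Z : Type*} [Fintype Z]
    (Neighbor : Y → Y → Prop)
    (M M' : Y → Z → ℝ) (ε δ γ : ℝ) (hε : 0 < ε) (hγ : γ ∈ Set.Ioo (0 : ℝ) 1)
    (hM_sum : ∀ y, ∑ z, M y z = 1)
    (hM'_sum : ∀ y, ∑ z, M' y z = 1)
    (hDP : ∀ y y', Neighbor y y' → ∀ E : Finset Z,
      ∑ z ∈ E, M y z ≤ Real.exp ε * ∑ z ∈ E, M y' z)
    (hTV : ∀ y, (1 / 2) * ∑ z, |M y z - M' y z| ≤ δ)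
    (hδ : δ ≤ (Real.exp ε - 1) / (Real.exp ε + 1) * (γ / (1 - γ)) * (1 / Fintype.card Z)) :
    ∀ y y', Neighbor y y' → ∀ E : Finset Z,
      ∑ z ∈ E, ((1 - γ) * M' y z + γ / Fintype.card Z)
        ≤ Real.exp ε * ∑ z ∈ E, ((1 - γ) * M' y' z + γ / Fintype.card Z) := by
  intro y y' hN E
  rcases E.eq_empty_or_nonempty with rfl | hE
  · simp
  obtain ⟨hγ0, hγ1⟩ := hγ
  set e := Real.exp ε
  set u := γ / (Fintype.card Z : ℝ)
  have he : 1 ≤ e := Real.one_le_exp hε.le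
  have hu : 0 ≤ u := by positivity
  have hk : (1 : ℝ) ≤ #E := by exact_mod_cast hE.card_pos
  have hM' := sum_le_mul_sum_add_of_tv_le (by positivity) ((hM_sum y).trans (hM'_sum y).symm)
    ((hM_sum y').trans (hM'_sum y').symm) (hTV y) (hTV y') E (hDP y y' hN E)
  have hslack := mul_add_one_mul_le_of_le_div (by positivity) hγ1 hδ
  simp only [sum_add_distrib, ← mul_sum, sum_const, nsmul_eq_mul]
  calc (1 - γ) * ∑ z ∈ E, M' y z + #E * u
      ≤ (1 - γ) * (e * ∑ z ∈ E, M' y' z + (e + 1) * δ) + #E * u := by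
        gcongr
    _ ≤ (1 - γ) * e * ∑ z ∈ E, M' y' z + (e - 1) * u + #E * u := by linarith
    _ ≤ (1 - γ) * e * ∑ z ∈ E, M' y' z + (e - 1) * (#E * u) + #E * u := by
        gcongr
        exact le_mul_of_one_le_left hu hk
    _ = e * ((1 - γ) * ∑ z ∈ E, M' y' z + #E * u) := by ring

/-- Purification preserves privacy: if `M` is `ε`-DP and `M'` is within total
variation distance `δ ≤ (e^ε-1)/(e^ε+1) · γ/(1-γ) · 1/|Z|` of `M` on every input,
then outputting `M'(y)` with probability `1-γ` and a uniform element of `Z` with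
probability `γ` is `ε`-DP. -/
theorem purification_preserves_privacy {Y Z : Type*} [Fintype Z] [Nonempty Z]
    (Neighbor : Y → Y → Prop)
    (M M' : Y → Z → ℝ) (ε δ γ : ℝ) (hε : 0 < ε) (hγ : γ ∈ Set.Ioo (0 : ℝ) 1)
    (hM_nonneg : ∀ y z, 0 ≤ M y z) (hM_sum : ∀ y, ∑ z, M y z = 1)
    (hM'_nonneg : ∀ y z, 0 ≤ M' y z) (hM'_sum : ∀ y, ∑ z, M' y z = 1)
    (hDP : ∀ y y', Neighbor y y' → ∀ E : Finset Z,
      ∑ z ∈ E, M y z ≤ Real.exp ε * ∑ z ∈ E, M y' z)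
    (hTV : ∀ y, (1 / 2) * ∑ z, |M y z - M' y z| ≤ δ)
    (hδ : δ ≤ (Real.exp ε - 1) / (Real.exp ε + 1) * (γ / (1 - γ)) * (1 / Fintype.card Z)) :
    ∀ y y', Neighbor y y' → ∀ E : Finset Z,
      ∑ z ∈ E, ((1 - γ) * M' y z + γ / Fintype.card Z)
        ≤ Real.exp ε * ∑ z ∈ E, ((1 - γ) * M' y' z + γ / Fintype.card Z) :=
  purification_preserves_privacy_general Neighbor M M' ε δ γ hε hγ hM_sum hM'_sum hDP hTV hδ
end

section
/- Privacy amplification by mixing: let μ, ν be probability distributions on a finite set Z that are (ε, δ)-indistinguishable (meaning for every E ⊆ Z, ν(E) ≤ e^ε·μ(E) + δ and μ(E) ≤ e^ε·ν(E) + δ). If δ ≤ (e^ε − 1)/(e^ε + 1) · γ/(1−γ) · 1/|Z| for γ ∈ (0,1), then the mixtures μ̃ = (1−γ)μ + γ·Unif(Z) and ν̃ = (1−γ)ν + γ·Unif(Z) are (ε, 0)-indistinguishable: for every E ⊆ Z, ν̃(E) ≤ e^ε·μ̃(E). -/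
/-- Privacy amplification by mixing: if distributions `μ, ν` on a finite set `Z`
are `(ε, δ)`-indistinguishable with `δ ≤ (e^ε−1)/(e^ε+1) · γ/(1−γ) · 1/|Z|`,
then the mixtures `(1−γ)μ + γ·Unif(Z)` and `(1−γ)ν + γ·Unif(Z)` are
`(ε, 0)`-indistinguishable: `ν̃(E) ≤ e^ε · μ̃(E)` for every `E ⊆ Z`. -/
theorem mixing_purifies_indistinguishability {Z : Type*} [Fintype Z] [Nonempty Z]
    (μ ν : Z → ℝ) (ε δ γ : ℝ) (hε : 0 < ε) (hγ : γ ∈ Set.Ioo (0 : ℝ) 1)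
    (hμ0 : ∀ z, 0 ≤ μ z) (hμ1 : ∑ z, μ z = 1)
    (hν0 : ∀ z, 0 ≤ ν z) (hν1 : ∑ z, ν z = 1)
    (hind₁ : ∀ E : Finset Z, ∑ z ∈ E, ν z ≤ Real.exp ε * ∑ z ∈ E, μ z + δ)
    (hind₂ : ∀ E : Finset Z, ∑ z ∈ E, μ z ≤ Real.exp ε * ∑ z ∈ E, ν z + δ)
    (hδ : δ ≤ (Real.exp ε - 1) / (Real.exp ε + 1) * (γ / (1 - γ)) * (1 / Fintype.card Z)) :
    ∀ E : Finset Z,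
      ∑ z ∈ E, ((1 - γ) * ν z + γ / Fintype.card Z)
        ≤ Real.exp ε * ∑ z ∈ E, ((1 - γ) * μ z + γ / Fintype.card Z) := by
  intro E
  obtain ⟨hγ0, hγ1⟩ := hγ
  rcases E.eq_empty_or_nonempty with rfl | hE
  · simp
  have hN : (0:ℝ) < Fintype.card Z := by exact_mod_cast Fintype.card_pos
  have hk : (1:ℝ) ≤ E.card := by exact_mod_cast hE.card_pos
  have he : 1 < Real.exp ε := by
    rw [show (1:ℝ) = Real.exp 0 by simp]
    exact Real.exp_lt_exp.2 hε
  set e := Real.exp ε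
  have h1γ : (0:ℝ) < 1 - γ := by linarith
  -- rewrite the sums
  have hsum : ∀ f : Z → ℝ, ∑ z ∈ E, ((1 - γ) * f z + γ / Fintype.card Z)
      = (1 - γ) * ∑ z ∈ E, f z + E.card * (γ / Fintype.card Z) := by
    intro f
    rw [Finset.sum_add_distrib, ← Finset.mul_sum, Finset.sum_const, nsmul_eq_mul]
  rw [hsum, hsum]
  have h1 := hind₁ E
  -- main bound on δ
  have hδ' : (1 - γ) * δ ≤ (e - 1) * γ / Fintype.card Z := by
    have step1 : (1 - γ) * δ ≤ (e - 1) / (e + 1) * γ * (1 / Fintype.card Z) := by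
      have := mul_le_mul_of_nonneg_left hδ h1γ.le
      calc (1 - γ) * δ ≤ (1 - γ) * ((e - 1) / (e + 1) * (γ / (1 - γ)) * (1 / Fintype.card Z)) := this
        _ = (e - 1) / (e + 1) * γ * (1 / Fintype.card Z) := by
            field_simp
    have step2 : (e - 1) / (e + 1) ≤ e - 1 := by
      rw [div_le_iff₀ (by linarith)]
      nlinarith
    calc (1 - γ) * δ ≤ (e - 1) / (e + 1) * γ * (1 / Fintype.card Z) := step1
      _ ≤ (e - 1) * γ * (1 / Fintype.card Z) := by
          apply mul_le_mul_of_nonneg_right (mul_le_mul_of_nonneg_right step2 hγ0.le)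
          positivity
      _ = (e - 1) * γ / Fintype.card Z := by ring
  have hμE : 0 ≤ ∑ z ∈ E, μ z := Finset.sum_nonneg fun z _ => hμ0 z
  have hkey : (e - 1) * γ / Fintype.card Z * ((E.card : ℝ) - 1) ≥ 0 := by
    apply mul_nonneg
    · apply div_nonneg (mul_nonneg (by linarith) hγ0.le) hN.le
    · linarith
  have hmul := mul_le_mul_of_nonneg_left h1 h1γ.le
  calc (1 - γ) * ∑ z ∈ E, ν z + E.card * (γ / Fintype.card Z)
      ≤ (1 - γ) * (e * ∑ z ∈ E, μ z + δ) + E.card * (γ / Fintype.card Z) := by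
        linarith [hmul]
    _ = e * (1 - γ) * ∑ z ∈ E, μ z + (1 - γ) * δ + E.card * (γ / Fintype.card Z) := by ring
    _ ≤ e * (1 - γ) * ∑ z ∈ E, μ z + (e - 1) * γ / Fintype.card Z + E.card * (γ / Fintype.card Z) := by
        linarith [hδ']
    _ ≤ e * (1 - γ) * ∑ z ∈ E, μ z + (e - 1) * γ / Fintype.card Z * E.card
          + E.card * (γ / Fintype.card Z) := by
        linarith [hkey]
    _ = e * ((1 - γ) * ∑ z ∈ E, μ z + E.card * (γ / Fintype.card Z)) := by ring
end

section
/- Utility of the purified mechanism: let ε > 0, n ∈ ℕ, γ ∈ (0,1), and let X be a random variable with TV(X, DLap(e^{−ε})) ≤ δ where δ = (e^ε−1)/(e^ε+1) · γ/(1−γ) · 1/(1+n). For t ∈ {0,...,n}, define M''(t) to equal clamp(t + X, 0, n) with probability 1−γ and a uniform sample from {0,...,n} with probability γ. Then for any integer r ≥ (1/ε)·ln(2/(β − ((2+n)/(1+n))·γ)) with β > ((2+n)/(1+n))·γ, P(|M''(t) − t| ≥ r) ≤ β. -/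
private lemma tail_geom_aux (c q : ℝ) (hc : 0 ≤ c) (hq0 : 0 < q) (hq1 : q < 1) (R : ℕ) :
    ∑' m : ℕ, (if R ≤ m then c * q ^ m else 0) = c * q ^ R * (1 - q)⁻¹ := by
  have hinj : Function.Injective (fun k : ℕ => k + R) := add_left_injective R
  have hsupp : Function.support (fun m : ℕ => if R ≤ m then c * q ^ m else 0)
      ⊆ Set.range (fun k : ℕ => k + R) := by
    intro x hx
    by_cases h : R ≤ x
    · exact ⟨x - R, show x - R + R = x by omega⟩
    · simp [Function.mem_support, h] at hx
  have h1 := hinj.tsum_eq (f := fun m : ℕ => if R ≤ m then c * q ^ m else 0) hsupp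
  rw [← h1]
  have h2 : (fun k : ℕ => if R ≤ k + R then c * q ^ (k + R) else 0)
      = fun k : ℕ => (c * q ^ R) * q ^ k := by
    funext k
    rw [if_pos (by omega)]
    rw [pow_add]; ring
  simpa [h2] using (by
    rw [show (fun k : ℕ => if R ≤ k + R then c * q ^ (k + R) else 0)
        = fun k : ℕ => (c * q ^ R) * q ^ k from h2, tsum_mul_left,
      tsum_geometric_of_lt_one hq0.le hq1] : ∑' k : ℕ, (if R ≤ k + R then c * q ^ (k + R) else 0)
        = c * q ^ R * (1 - q)⁻¹)

private lemma summable_tail_geom (c q : ℝ) (hc : 0 ≤ c) (hq0 : 0 < q) (hq1 : q < 1)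
    (P : ℕ → Prop) [DecidablePred P] :
    Summable (fun m : ℕ => if P m then c * q ^ m else 0) := by
  exact Summable.of_nonneg_of_le
    (fun m => by split_ifs <;> positivity)
    (fun m => by split_ifs with h; exacts [le_rfl, by positivity])
    ((summable_geometric_of_lt_one hq0.le hq1).mul_left c)

private lemma tail_int_aux (c q : ℝ) (hc : 0 ≤ c) (hq0 : 0 < q) (hq1 : q < 1) (R : ℕ)
    (hR : 1 ≤ R) :
    ∑' s : ℤ, (if (R : ℤ) ≤ |s| then c * q ^ s.natAbs else 0)
      = 2 * (c * q ^ R * (1 - q)⁻¹) := by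
  set f : ℤ → ℝ := fun s => if (R : ℤ) ≤ |s| then c * q ^ s.natAbs else 0 with hf
  have hnat : (fun m : ℕ => f (m : ℤ)) = fun m : ℕ => if R ≤ m then c * q ^ m else 0 := by
    funext m
    have h1 : |(m : ℤ)| = (m : ℤ) := abs_of_nonneg (Int.ofNat_nonneg m)
    have h2 : ((R : ℤ) ≤ (m : ℤ)) = (R ≤ m) := by simp only [eq_iff_iff]; omega
    simp only [hf, h1, Int.natAbs_natCast, h2]
  have hneg : (fun m : ℕ => f (-((m : ℤ) + 1)))
      = fun m : ℕ => if R ≤ m + 1 then c * q ^ (m + 1) else 0 := by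
    funext m
    have h1 : |(-((m : ℤ) + 1))| = ((m : ℤ) + 1) := by
      rw [abs_neg]; exact abs_of_nonneg (by positivity)
    have h2 : (-((m : ℤ) + 1)).natAbs = m + 1 := by omega
    have h3 : ((R : ℤ) ≤ (m : ℤ) + 1) = (R ≤ m + 1) := by
      simp only [eq_iff_iff]; omega
    simp only [hf, h1, h2, h3]
  have hs1 : Summable (fun m : ℕ => f (m : ℤ)) := by
    rw [hnat]; exact summable_tail_geom c q hc hq0 hq1 _
  have hs2 : Summable (fun m : ℕ => f (-((m : ℤ) + 1))) := by
    rw [hneg]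
    exact Summable.of_nonneg_of_le
      (fun m => by split_ifs <;> positivity)
      (fun m => by
        split_ifs with h
        · exact le_of_eq (by rw [pow_succ]; ring)
        · positivity)
      ((summable_geometric_of_lt_one hq0.le hq1).mul_left (c * q))
  have negsum : ∑' m : ℕ, (if R ≤ m + 1 then c * q ^ (m + 1) else 0)
      = c * q ^ R * (1 - q)⁻¹ := by
    have hinj : Function.Injective (fun k : ℕ => k + (R - 1)) := add_left_injective _
    have hsupp : Function.support (fun m : ℕ => if R ≤ m + 1 then c * q ^ (m + 1) else 0)
        ⊆ Set.range (fun k : ℕ => k + (R - 1)) := by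
      intro x hx
      by_cases h : R ≤ x + 1
      · exact ⟨x - (R - 1), show x - (R - 1) + (R - 1) = x by omega⟩
      · simp [Function.mem_support, h] at hx
    have h1 := hinj.tsum_eq
      (f := fun m : ℕ => if R ≤ m + 1 then c * q ^ (m + 1) else 0) hsupp
    rw [← h1]
    have h2 : (fun k : ℕ => if R ≤ k + (R - 1) + 1 then c * q ^ (k + (R - 1) + 1) else 0)
        = fun k : ℕ => (c * q ^ R) * q ^ k := by
      funext k
      rw [if_pos (by omega), show k + (R - 1) + 1 = R + k by omega, pow_add]
      ring
    simpa [h2] using (by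
      rw [show (fun k : ℕ => if R ≤ k + (R - 1) + 1 then c * q ^ (k + (R - 1) + 1) else 0)
          = fun k : ℕ => (c * q ^ R) * q ^ k from h2, tsum_mul_left,
        tsum_geometric_of_lt_one hq0.le hq1] :
        ∑' k : ℕ, (if R ≤ k + (R - 1) + 1 then c * q ^ (k + (R - 1) + 1) else 0)
          = c * q ^ R * (1 - q)⁻¹)
  rw [tsum_of_nat_of_neg_add_one hs1 hs2, hnat, hneg, tail_geom_aux c q hc hq0 hq1 R, negsum]
  ring

set_option maxHeartbeats 2000000 in
/-- Utility of the purified mechanism. -/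
theorem purified_mechanism_utility (ε : ℝ) (hε : 0 < ε) (n : ℕ) (γ : ℝ)
    (hγ : γ ∈ Set.Ioo (0 : ℝ) 1)
    (pX : ℤ → ℝ) (hX0 : ∀ s, 0 ≤ pX s) (hX1 : ∑' s, pX s = 1)
    (hTV : (1 / 2) * ∑' s : ℤ,
        |pX s - (1 - Real.exp (-ε)) / (1 + Real.exp (-ε)) * Real.exp (-ε * (|s| : ℤ))|
      ≤ (Real.exp ε - 1) / (Real.exp ε + 1) * (γ / (1 - γ)) * (1 / (1 + n)))
    (t : ℕ) (ht : t ≤ n) (β : ℝ) (hβ : ((2 + n) / (1 + n)) * γ < β)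
    (r : ℤ) (hr : (1 / ε) * Real.log (2 / (β - ((2 + n) / (1 + n)) * γ)) ≤ r) :
    (∑ z ∈ Finset.range (n + 1),
      if r ≤ |(z : ℤ) - (t : ℤ)|
        then (1 - γ) * (∑' s : ℤ, if max 0 (min ((t : ℤ) + s) (n : ℤ)) = (z : ℤ)
                          then pX s else 0)
             + γ / (n + 1)
        else 0) ≤ β := by
  classical
  obtain ⟨hγ0, hγ1⟩ := hγ
  have hN0 : (0:ℝ) ≤ (n:ℝ) := Nat.cast_nonneg n
  have hN1 : (0:ℝ) < 1 + (n:ℝ) := by linarith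
  set q : ℝ := Real.exp (-ε) with hq_def
  have hq0 : 0 < q := Real.exp_pos _
  have hq1 : q < 1 := by rw [hq_def, Real.exp_lt_one_iff]; linarith
  set c : ℝ := (1 - q) / (1 + q) with hc_def
  have hc0 : 0 ≤ c := div_nonneg (by linarith) (by linarith)
  set pZ : ℤ → ℝ := fun s => c * q ^ s.natAbs with hpZ_def
  have hpZ0 : ∀ s, 0 ≤ pZ s := fun s => mul_nonneg hc0 (pow_nonneg hq0.le _)
  have hpZeq : ∀ s : ℤ,
      (1 - q) / (1 + q) * Real.exp (-ε * (|s| : ℤ)) = pZ s := by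
    intro s
    have h1 : ((|s| : ℤ) : ℝ) = (s.natAbs : ℝ) := by
      simp [Int.cast_abs, Nat.cast_natAbs]
    have h2 : Real.exp (-ε * (s.natAbs : ℝ)) = q ^ s.natAbs := by
      rw [mul_comm, Real.exp_nat_mul]
    simp only [hpZ_def]
    rw [h1, h2, ← hc_def]
  have hsum_pX : Summable pX := by
    by_contra h
    rw [tsum_eq_zero_of_not_summable h] at hX1
    norm_num at hX1
  have hsum_pZ : Summable pZ := by
    apply Summable.of_nat_of_neg_add_one
    · have h : (fun m : ℕ => pZ (m:ℤ)) = fun m : ℕ => c * q ^ m := by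
        funext m; simp only [hpZ_def, Int.natAbs_natCast]
      rw [h]
      exact (summable_geometric_of_lt_one hq0.le hq1).mul_left c
    · have h : (fun m : ℕ => pZ (-((m:ℤ)+1))) = fun m : ℕ => (c*q) * q ^ m := by
        funext m
        have h2 : (-((m : ℤ) + 1)).natAbs = m + 1 := by omega
        simp only [hpZ_def, h2, pow_succ]; ring
      rw [h]
      exact (summable_geometric_of_lt_one hq0.le hq1).mul_left _
  have hsumD : Summable (fun s => |pX s - pZ s|) := by
    refine Summable.of_nonneg_of_le (fun s => abs_nonneg _) (fun s => ?_)
      (hsum_pX.add hsum_pZ)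
    have h1 := hX0 s; have h2 := hpZ0 s
    exact abs_le.mpr ⟨by linarith, by linarith⟩
  have hTV2 : ∑' s, |pX s - pZ s|
      ≤ 2 * ((Real.exp ε - 1)/(Real.exp ε + 1) * (γ/(1-γ)) * (1/(1+(n:ℝ)))) := by
    have heq : ∑' s, |pX s - pZ s|
        = ∑' s : ℤ, |pX s - (1 - q) / (1 + q) * Real.exp (-ε * (|s| : ℤ))| :=
      tsum_congr (fun s => by rw [hpZeq s])
    rw [heq]; linarith [hTV]
  have ht' : (t:ℤ) ≤ (n:ℤ) := by exact_mod_cast ht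
  have ht0 : (0:ℤ) ≤ (t:ℤ) := Int.ofNat_nonneg t
  have hclamp : ∀ s : ℤ, |max 0 (min ((t:ℤ) + s) (n:ℤ)) - (t:ℤ)| ≤ |s| := by
    intro s
    have h1 : -|s| ≤ s := neg_abs_le s
    have h2 : s ≤ |s| := le_abs_self s
    rw [abs_le]
    constructor <;> omega
  set F : ℕ → ℤ → ℝ := fun z s =>
    if r ≤ |(z:ℤ) - (t:ℤ)| then
      (if max 0 (min ((t:ℤ) + s) (n:ℤ)) = (z:ℤ) then pX s else 0) else 0 with hF_def
  have hF0 : ∀ z s, 0 ≤ F z s := fun z s => by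
    simp only [hF_def]; split_ifs; exacts [hX0 s, le_rfl, le_rfl]
  have hFle : ∀ z s, F z s ≤ pX s := fun z s => by
    simp only [hF_def]; split_ifs; exacts [le_rfl, hX0 s, hX0 s]
  have hsumF : ∀ z, Summable (F z) := fun z =>
    Summable.of_nonneg_of_le (hF0 z) (hFle z) hsum_pX
  set S2 : ℝ := ∑ z ∈ Finset.range (n+1),
      (if r ≤ |(z:ℤ) - (t:ℤ)| then γ/((n:ℝ)+1) else 0) with hS2_def
  have hsplit : ∀ z ∈ Finset.range (n+1),
      (if r ≤ |(z:ℤ) - (t:ℤ)| then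
        (1-γ) * (∑' s : ℤ, if max 0 (min ((t:ℤ)+s) (n:ℤ)) = (z:ℤ) then pX s else 0)
          + γ/((n:ℝ)+1)
      else 0)
      = (1-γ) * (∑' s, F z s) + (if r ≤ |(z:ℤ)-(t:ℤ)| then γ/((n:ℝ)+1) else 0) := by
    intro z _
    by_cases h : r ≤ |(z:ℤ)-(t:ℤ)|
    · simp only [hF_def, if_pos h]
    · simp only [hF_def, if_neg h, tsum_zero, mul_zero, add_zero]
  have hgoal_eq : (∑ z ∈ Finset.range (n + 1),
      if r ≤ |(z : ℤ) - (t : ℤ)|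
        then (1 - γ) * (∑' s : ℤ, if max 0 (min ((t : ℤ) + s) (n : ℤ)) = (z : ℤ)
                          then pX s else 0)
             + γ / (n + 1)
        else 0)
      = (1-γ) * (∑' s : ℤ, ∑ z ∈ Finset.range (n+1), F z s) + S2 := by
    rw [Finset.sum_congr rfl hsplit, Finset.sum_add_distrib, ← Finset.mul_sum,
      ← Summable.tsum_finsetSum (fun z _ => hsumF z)]
  rw [hgoal_eq]
  have hptw : ∀ s : ℤ, (∑ z ∈ Finset.range (n+1), F z s)
      ≤ (if r ≤ |s| then pX s else 0) := by
    intro s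
    set u : ℤ := max 0 (min ((t:ℤ) + s) (n:ℤ)) with hu_def
    have hu0 : 0 ≤ u := le_max_left _ _
    have hun : u ≤ (n:ℤ) := max_le (Int.ofNat_nonneg n) (min_le_right _ _)
    have hz0mem : u.toNat ∈ Finset.range (n+1) := by
      rw [Finset.mem_range]; omega
    have hz0cast : ((u.toNat : ℕ) : ℤ) = u := Int.toNat_of_nonneg hu0
    have hsum_eq : (∑ z ∈ Finset.range (n+1), F z s) = F u.toNat s := by
      apply Finset.sum_eq_single_of_mem _ hz0mem
      intro b _ hb
      have hbne : ¬ (max 0 (min ((t:ℤ) + s) (n:ℤ)) = (b:ℤ)) := by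
        rw [← hu_def]; intro h; apply hb; omega
      simp only [hF_def, if_neg hbne, ite_self]
    rw [hsum_eq]
    have habs : |u - (t:ℤ)| ≤ |s| := hclamp s
    simp only [hF_def]
    by_cases h : r ≤ |((u.toNat : ℕ) : ℤ) - (t:ℤ)|
    · rw [if_pos h]
      have hcond : max 0 (min ((t:ℤ) + s) (n:ℤ)) = ((u.toNat : ℕ) : ℤ) := by
        rw [← hu_def, hz0cast]
      rw [if_pos hcond]
      have hrs : r ≤ |s| := le_trans (by rwa [hz0cast] at h) habs
      rw [if_pos hrs]
    · rw [if_neg h]; split_ifs; exacts [hX0 s, le_rfl]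
  have hsumIte_pX : Summable (fun s : ℤ => if r ≤ |s| then pX s else 0) :=
    Summable.of_nonneg_of_le
      (fun s => by split_ifs; exacts [hX0 s, le_rfl])
      (fun s => by split_ifs; exacts [le_rfl, hX0 s]) hsum_pX
  have hsumIteZ : Summable (fun s : ℤ => if r ≤ |s| then pZ s else 0) :=
    Summable.of_nonneg_of_le
      (fun s => by split_ifs; exacts [hpZ0 s, le_rfl])
      (fun s => by split_ifs; exacts [le_rfl, hpZ0 s]) hsum_pZ
  have hsumFsum : Summable (fun s : ℤ => ∑ z ∈ Finset.range (n+1), F z s) :=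
    summable_sum (fun z _ => hsumF z)
  have hT : (∑' s : ℤ, ∑ z ∈ Finset.range (n+1), F z s)
      ≤ ∑' s : ℤ, (if r ≤ |s| then pX s else 0) :=
    Summable.tsum_le_tsum hptw hsumFsum hsumIte_pX
  have hT1 : (∑' s : ℤ, (if r ≤ |s| then pX s else 0)) ≤ 1 := by
    rw [← hX1]
    exact Summable.tsum_le_tsum (fun s => by split_ifs; exacts [le_rfl, hX0 s])
      hsumIte_pX hsum_pX
  set d : ℝ := β - ((2 + (n:ℝ))/(1 + (n:ℝ))) * γ with hd_def
  have hd0 : 0 < d := by rw [hd_def]; linarith [hβ]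
  have hεr : Real.log (2/d) ≤ ε * r := by
    have h := mul_le_mul_of_nonneg_left hr hε.le
    have h2 : ε * ((1/ε) * Real.log (2/d)) = Real.log (2/d) := by
      rw [← mul_assoc, mul_one_div, div_self hε.ne', one_mul]
    linarith [h, h2]
  have hS2γ : S2 ≤ γ := by
    rw [hS2_def]
    calc ∑ z ∈ Finset.range (n+1), (if r ≤ |(z:ℤ) - (t:ℤ)| then γ/((n:ℝ)+1) else 0)
        ≤ ∑ z ∈ Finset.range (n+1), γ/((n:ℝ)+1) :=
          Finset.sum_le_sum (fun z _ => by split_ifs; exacts [le_rfl, by positivity])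
      _ = (n+1 : ℕ) * (γ/((n:ℝ)+1)) := by
          rw [Finset.sum_const, Finset.card_range, nsmul_eq_mul]
      _ = γ := by push_cast; field_simp
  by_cases hrpos : 1 ≤ r
  · -- main case
    set R : ℕ := r.toNat with hR_def
    have hRr : (R:ℤ) = r := Int.toNat_of_nonneg (by omega)
    have hR1 : 1 ≤ R := by omega
    have htail : ∑' s : ℤ, (if r ≤ |s| then pZ s else 0) ≤ 2 * Real.exp (-(ε * r)) := by
      have heq : (fun s : ℤ => if r ≤ |s| then pZ s else 0)
          = fun s : ℤ => if (R:ℤ) ≤ |s| then c * q ^ s.natAbs else 0 := by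
        funext s; rw [hRr]
      rw [heq, tail_int_aux c q hc0 hq0 hq1 R hR1]
      have hcq : c * (1-q)⁻¹ = (1+q)⁻¹ := by
        have hA : (1:ℝ) - q ≠ 0 := ne_of_gt (by linarith)
        have hE : c * (1-q)⁻¹ = ((1-q) * (1-q)⁻¹) * (1+q)⁻¹ := by rw [hc_def]; ring
        rw [hE, mul_inv_cancel₀ hA, one_mul]
      have hcast : ((R:ℕ):ℝ) = ((r:ℤ):ℝ) := by exact_mod_cast hRr
      have hqR : q ^ R = Real.exp (-(ε * r)) := by
        rw [hq_def, ← Real.exp_nat_mul]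
        congr 1
        rw [hcast]; ring
      calc 2 * (c * q^R * (1-q)⁻¹) = 2 * q^R * (c * (1-q)⁻¹) := by ring
        _ = 2 * q^R * (1+q)⁻¹ := by rw [hcq]
        _ ≤ 2 * q^R * 1 := by
            apply mul_le_mul_of_nonneg_left _ (by positivity)
            exact inv_le_one_of_one_le₀ (by linarith)
        _ = 2 * Real.exp (-(ε*r)) := by rw [hqR]; ring
    have hexp : 2 * Real.exp (-(ε * r)) ≤ d := by
      have h1 : 2/d ≤ Real.exp (ε * r) := by
        have h := Real.exp_le_exp.2 hεr
        rwa [Real.exp_log (by positivity)] at h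
      have hE : 0 < Real.exp (ε * r) := Real.exp_pos _
      rw [div_le_iff₀ hd0] at h1
      have h2 : 2 / Real.exp (ε*r) ≤ d := (div_le_iff₀ hE).2 (by linarith)
      rw [Real.exp_neg]
      calc 2 * (Real.exp (ε*r))⁻¹ = 2 / Real.exp (ε*r) := by ring
        _ ≤ d := h2
    have hTbound : (∑' s : ℤ, (if r ≤ |s| then pX s else 0))
        ≤ (∑' s : ℤ, (if r ≤ |s| then pZ s else 0)) + ∑' s, |pX s - pZ s| := by
      rw [← Summable.tsum_add hsumIteZ hsumD]
      refine Summable.tsum_le_tsum (fun s => ?_) hsumIte_pX (hsumIteZ.add hsumD)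
      have h1 := hpZ0 s
      have h2 : pX s - pZ s ≤ |pX s - pZ s| := le_abs_self _
      have h3 := abs_nonneg (pX s - pZ s)
      split_ifs with h
      · linarith
      · linarith
    have hS2n : S2 ≤ (n:ℝ) * (γ/((n:ℝ)+1)) := by
      have hfil : S2 = (((Finset.range (n+1)).filter
          (fun z : ℕ => r ≤ |(z:ℤ)-(t:ℤ)|)).card : ℝ) * (γ/((n:ℝ)+1)) := by
        rw [hS2_def, ← Finset.sum_filter, Finset.sum_const, nsmul_eq_mul]
      have hcard : ((Finset.range (n+1)).filter
          (fun z : ℕ => r ≤ |(z:ℤ)-(t:ℤ)|)).card ≤ n := by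
        have hsub : (Finset.range (n+1)).filter (fun z : ℕ => r ≤ |(z:ℤ)-(t:ℤ)|)
            ⊆ (Finset.range (n+1)).erase t := by
          intro z hz
          rw [Finset.mem_filter] at hz
          rw [Finset.mem_erase]
          refine ⟨?_, hz.1⟩
          rintro rfl
          have h0 := hz.2
          rw [sub_self, abs_zero] at h0
          omega
        have h := Finset.card_le_card hsub
        rwa [Finset.card_erase_of_mem (Finset.mem_range.2 (by omega)),
          Finset.card_range, Nat.add_sub_cancel] at h
      rw [hfil]
      apply mul_le_mul_of_nonneg_right _ (by positivity)
      exact_mod_cast hcard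
    -- final arithmetic
    set k : ℝ := (Real.exp ε - 1)/(Real.exp ε + 1) with hk_def
    have hexpε1 : (1:ℝ) ≤ Real.exp ε := by
      rw [← Real.exp_zero]; exact Real.exp_le_exp.2 hε.le
    have hexpε0 : (0:ℝ) < Real.exp ε := Real.exp_pos _
    have hk1 : k ≤ 1 := by
      rw [hk_def, div_le_one (by linarith)]; linarith
    have hk0 : 0 ≤ k := div_nonneg (by linarith) (by linarith)
    have hδ : (1-γ) * (∑' s, |pX s - pZ s|) ≤ 2 * k * γ * (1/(1+(n:ℝ))) := by
      have h3 : (1-γ) * (2*(k*(γ/(1-γ))*(1/(1+(n:ℝ))))) = 2*k*γ*(1/(1+(n:ℝ))) := by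
        have hA : (1:ℝ) - γ ≠ 0 := ne_of_gt (by linarith)
        field_simp
      calc (1-γ) * (∑' s, |pX s - pZ s|)
          ≤ (1-γ) * (2*(k*(γ/(1-γ))*(1/(1+(n:ℝ))))) :=
            mul_le_mul_of_nonneg_left hTV2 (by linarith)
        _ = _ := h3
    have hZ0 : 0 ≤ ∑' s : ℤ, (if r ≤ |s| then pZ s else 0) :=
      tsum_nonneg (fun s => by split_ifs; exacts [hpZ0 s, le_rfl])
    have hD0 : 0 ≤ ∑' s, |pX s - pZ s| := tsum_nonneg (fun s => abs_nonneg _)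
    have h1 : (1-γ) * (∑' s : ℤ, ∑ z ∈ Finset.range (n+1), F z s)
        ≤ (1-γ) * (∑' s : ℤ, (if r ≤ |s| then pX s else 0)) :=
      mul_le_mul_of_nonneg_left hT (by linarith)
    have h2 : (1-γ) * (∑' s : ℤ, (if r ≤ |s| then pX s else 0))
        ≤ (1-γ) * ((∑' s : ℤ, (if r ≤ |s| then pZ s else 0)) + ∑' s, |pX s - pZ s|) :=
      mul_le_mul_of_nonneg_left hTbound (by linarith)
    have hdist : (1-γ) * ((∑' s : ℤ, (if r ≤ |s| then pZ s else 0)) + ∑' s, |pX s - pZ s|)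
        = (1-γ) * (∑' s : ℤ, (if r ≤ |s| then pZ s else 0))
          + (1-γ) * (∑' s, |pX s - pZ s|) := by ring
    have h3 : (1-γ) * (∑' s : ℤ, (if r ≤ |s| then pZ s else 0))
        ≤ ∑' s : ℤ, (if r ≤ |s| then pZ s else 0) := by
      linarith [mul_nonneg hγ0.le hZ0]
    have h5 : 2 * k * γ * (1/(1+(n:ℝ))) ≤ 2 * γ * (1/(1+(n:ℝ))) := by
      have h0 : (0:ℝ) ≤ γ * (1/(1+(n:ℝ))) := by positivity
      linarith [mul_nonneg (show (0:ℝ) ≤ 1 - k by linarith) h0]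
    have h6 : 2 * γ * (1/(1+(n:ℝ))) + (n:ℝ) * (γ/((n:ℝ)+1))
        = ((2 + (n:ℝ))/(1 + (n:ℝ))) * γ := by
      field_simp
      ring
    calc (1-γ) * (∑' s : ℤ, ∑ z ∈ Finset.range (n+1), F z s) + S2
        ≤ (1-γ) * (∑' s : ℤ, (if r ≤ |s| then pX s else 0)) + S2 :=
          add_le_add h1 le_rfl
      _ ≤ (1-γ) * ((∑' s : ℤ, (if r ≤ |s| then pZ s else 0)) + ∑' s, |pX s - pZ s|)
            + S2 := add_le_add h2 le_rfl
      _ = ((1-γ) * (∑' s : ℤ, (if r ≤ |s| then pZ s else 0))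
            + (1-γ) * (∑' s, |pX s - pZ s|)) + S2 := by rw [hdist]
      _ ≤ ((∑' s : ℤ, (if r ≤ |s| then pZ s else 0)) + 2 * k * γ * (1/(1+(n:ℝ))))
            + (n:ℝ) * (γ/((n:ℝ)+1)) := add_le_add (add_le_add h3 hδ) hS2n
      _ ≤ (2 * Real.exp (-(ε * r)) + 2 * γ * (1/(1+(n:ℝ))))
            + (n:ℝ) * (γ/((n:ℝ)+1)) := add_le_add (add_le_add htail h5) le_rfl
      _ ≤ (d + 2 * γ * (1/(1+(n:ℝ)))) + (n:ℝ) * (γ/((n:ℝ)+1)) :=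
          add_le_add (add_le_add hexp le_rfl) le_rfl
      _ = d + (2 * γ * (1/(1+(n:ℝ))) + (n:ℝ) * (γ/((n:ℝ)+1))) := by ring
      _ = d + ((2 + (n:ℝ))/(1 + (n:ℝ))) * γ := by rw [h6]
      _ = β := by rw [hd_def]; ring
  · -- r ≤ 0 : trivial bound by 1 ≤ 2 ≤ β
    have hr0 : r ≤ 0 := by omega
    have hr0' : (r:ℝ) ≤ 0 := by exact_mod_cast hr0
    have hlog : Real.log (2/d) ≤ 0 :=
      le_trans hεr (mul_nonpos_iff.2 (Or.inl ⟨hε.le, hr0'⟩))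
    have h2d : 2/d ≤ 1 := by
      have h := Real.exp_le_exp.2 hlog
      rwa [Real.exp_log (by positivity), Real.exp_zero] at h
    have hβ2 : 2 ≤ β := by
      have hd2 : 2 ≤ d := by rw [div_le_one hd0] at h2d; linarith
      have hcd : 0 ≤ ((2 + (n:ℝ))/(1 + (n:ℝ))) * γ := by positivity
      rw [hd_def] at hd2; linarith
    have h1 : (1-γ) * (∑' s : ℤ, ∑ z ∈ Finset.range (n+1), F z s)
        ≤ (1-γ) * (∑' s : ℤ, (if r ≤ |s| then pX s else 0)) :=
      mul_le_mul_of_nonneg_left hT (by linarith)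
    have h2 : (1-γ) * (∑' s : ℤ, (if r ≤ |s| then pX s else 0)) ≤ (1-γ) * 1 :=
      mul_le_mul_of_nonneg_left hT1 (by linarith)
    linarith [h1, h2, hS2γ, hβ2]
end
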